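/- Let s : A → B and t : A → C be functors of small categories and V a bicomplete category. For the cocomma square with inclusions f : B → B ↑_A C and g : C → B ↑_A C, the dual base change natural transformation f^* g_* ⟹ s_* t^* is a natural isomorphism of functors Fun(C, V) → Fun(B, V). -/

import Mathlib

open CategoryTheory CategoryTheory.Limits
universe v w u

section BaseChange
variable {A B C D : Type u} [SmallCategory A] [SmallCategory B] [SmallCategory C] [SmallCategory D]
variable (V : Type v) [Category.{w} V] [HasLimitsOfSize.{u,u} V]

/-- The transformation `f^* ⋙ s^* ⟶ g^* ⋙ t^*` induced by `α : s ⋙ f ⟶ t ⋙ g`. -/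
def restrictionSquare (s : A ⥤ B) (t : A ⥤ C) (f : B ⥤ D) (g : C ⥤ D) (α : s ⋙ f ⟶ t ⋙ g) :
    ((Functor.whiskeringLeft B D V).obj f ⋙ (Functor.whiskeringLeft A B V).obj s : (D ⥤ V) ⥤ (A ⥤ V)) ⟶
      (Functor.whiskeringLeft C D V).obj g ⋙ (Functor.whiskeringLeft A C V).obj t where
  app H := Functor.whiskerRight α H
  naturality := by intros; ext; simp

/-- The dual base change natural transformation `f^* g_* ⟶ s_* t^*` of a lax square,
built from the unit of `g^* ⊣ g_*` and the counit of `s^* ⊣ s_*`. -/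
noncomputable def coBaseChange (s : A ⥤ B) (t : A ⥤ C) (f : B ⥤ D) (g : C ⥤ D)
    (α : s ⋙ f ⟶ t ⋙ g) :
    (Functor.ran g ⋙ (Functor.whiskeringLeft B D V).obj f : (C ⥤ V) ⥤ (B ⥤ V)) ⟶
      (Functor.whiskeringLeft A C V).obj t ⋙ Functor.ran s :=
  Functor.whiskerLeft (Functor.ran g ⋙ (Functor.whiskeringLeft B D V).obj f) (s.ranAdjunction V).unit ≫
    Functor.whiskerRight (Functor.whiskerLeft (Functor.ran g) (restrictionSquare V s t f g α)) (Functor.ran s) ≫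
    Functor.whiskerRight (g.ranAdjunction V).counit ((Functor.whiskeringLeft A C V).obj t ⋙ Functor.ran s)

end BaseChange
variable {A B C : Type u} [SmallCategory A] [SmallCategory B] [SmallCategory C]

/-- A word `b ⟶ s(a) ⟶ t(a) ⟶ c` representing a morphism of the cocomma category. -/
structure CocommaWord (s : A ⥤ B) (t : A ⥤ C) (b : B) (c : C) : Type u where
  pt : A
  l : b ⟶ s.obj pt
  r : t.obj pt ⟶ c

/-- The relation on words generated by morphisms of `A`. -/
inductive CocommaRel (s : A ⥤ B) (t : A ⥤ C) (b : B) (c : C) :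
    CocommaWord s t b c → CocommaWord s t b c → Prop
  | mk {a a' : A} (θ : a ⟶ a') (φ : b ⟶ s.obj a) (ψ : t.obj a' ⟶ c) :
      CocommaRel s t b c ⟨a, φ, t.map θ ≫ ψ⟩ ⟨a', φ ≫ s.map θ, ψ⟩

/-- The cocomma (flow sum) category `B ↑_A C`: objects are `Ob B ⊔ Ob C`. -/
def Cocomma (s : A ⥤ B) (t : A ⥤ C) : Type u := B ⊕ C

variable (s : A ⥤ B) (t : A ⥤ C)

/-- Morphisms of the cocomma category. -/
def CocommaHom : Cocomma s t → Cocomma s t → Type u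
  | .inl b, .inl b' => b ⟶ b'
  | .inl b, .inr c => Quot (CocommaRel s t b c)
  | .inr _, .inl _ => PEmpty
  | .inr c, .inr c' => c ⟶ c'

instance : Category.{u} (Cocomma s t) where
  Hom := CocommaHom s t
  id x := match x with
    | .inl b => (𝟙 b : b ⟶ b)
    | .inr c => (𝟙 c : c ⟶ c)
  comp {x y z} F G := match x, y, z, F, G with
    | .inl _, .inl _, .inl _, F, G => (F ≫ G : _ ⟶ _)
    | .inl _b, .inl _b', .inr _c, F, G =>
        Quot.lift (fun w => Quot.mk _ ⟨w.pt, F ≫ w.l, w.r⟩)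
          (by rintro _ _ ⟨θ, φ, ψ⟩; dsimp
              erw [← Category.assoc]
              exact Quot.sound (CocommaRel.mk θ (F ≫ φ) ψ)) G
    | .inl _b, .inr _c, .inr _c', F, G =>
        Quot.lift (fun w => Quot.mk _ ⟨w.pt, w.l, w.r ≫ G⟩)
          (by rintro _ _ ⟨θ, φ, ψ⟩; dsimp
              erw [Category.assoc]
              exact Quot.sound (CocommaRel.mk θ φ (ψ ≫ G))) F
    | .inr _, .inr _, .inr _, F, G => (F ≫ G : _ ⟶ _)
    | .inr _, .inl _, _, F, _ => F.elim
    | .inl _, .inr _, .inl _, _, G => G.elim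
    | .inr _, .inr _, .inl _, _, G => G.elim
  id_comp {x y} F := by
    match x, y, F with
    | .inl _, .inl _, F => exact Category.id_comp F
    | .inl _, .inr _, F =>
        induction F using Quot.ind with
        | _ w => dsimp; rw [Category.id_comp]
    | .inr _, .inl _, F => exact F.elim
    | .inr _, .inr _, F => exact Category.id_comp F
  comp_id {x y} F := by
    match x, y, F with
    | .inl _, .inl _, F => exact Category.comp_id F
    | .inl _, .inr _, F =>
        induction F using Quot.ind with
        | _ w => dsimp; rw [Category.comp_id]
    | .inr _, .inl _, F => exact F.elim
    | .inr _, .inr _, F => exact Category.comp_id F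
  assoc {x y z w} F G H := by
    match x, y, z, w, F, G, H with
    | .inl _, .inl _, .inl _, .inl _, F, G, H => exact Category.assoc F G H
    | .inl _, .inl _, .inl _, .inr _, F, G, H =>
        induction H using Quot.ind with
        | _ w => dsimp; erw [Category.assoc]
    | .inl _, .inl _, .inr _, .inr _, F, G, H =>
        induction G using Quot.ind with
        | _ w => dsimp
    | .inl _, .inr _, .inr _, .inr _, F, G, H =>
        induction F using Quot.ind with
        | _ w => dsimp; erw [Category.assoc]
    | .inr _, .inr _, .inr _, .inr _, F, G, H => exact Category.assoc F G H
    | .inr _, .inl _, _, _, F, _, _ => exact F.elim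
    | .inl _, .inr _, .inl _, _, _, G, _ => exact G.elim
    | .inr _, .inr _, .inl _, _, _, G, _ => exact G.elim
    | _, .inl _, .inr _, .inl _, _, _, H => exact H.elim
    | _, .inr _, .inr _, .inl _, _, _, H => exact H.elim

/-- The inclusion of `B` into the cocomma category. -/
def Cocomma.inlF : B ⥤ Cocomma s t where
  obj b := Sum.inl b
  map φ := φ
  map_id _ := rfl
  map_comp _ _ := rfl

/-- The inclusion of `C` into the cocomma category. -/
def Cocomma.inrF : C ⥤ Cocomma s t where
  obj c := Sum.inr c
  map φ := φ
  map_id _ := rfl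
  map_comp _ _ := rfl

/-- The canonical natural transformation of the cocomma (lax) square. -/
def Cocomma.natTrans : s ⋙ Cocomma.inlF s t ⟶ t ⋙ Cocomma.inrF s t where
  app a := Quot.mk _ ⟨a, 𝟙 _, 𝟙 _⟩
  naturality a a' θ := by
    dsimp [Cocomma.inlF, Cocomma.inrF]
    show Quot.mk _ _ = Quot.mk _ _
    have := Quot.sound (CocommaRel.mk (s := s) (t := t) θ (𝟙 (s.obj a)) (𝟙 (t.obj a')))
    simpa using this.symm

/-! Pointwise, `(f^* g_* H)(b)` is the limit of `H` over `f b ↓ g` and `(s_* t^* H)(b)` the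
limit of `t ⋙ H` over `b ↓ s`; the base change map is restriction of limits along the functor
`b ↓ s ⥤ f b ↓ g` induced by the square, so it is invertible as soon as that functor is initial.
For the cocomma square, the comma category of this functor over an arrow `b ⟶ c` of `B ↑_A C`
has as objects the words `b ⟶ s a`, `t a ⟶ c` representing that arrow, and its morphisms include
the generators of the relation identifying words; since the arrow is the equivalence class of
the word, this category is connected. -/

section BaseChangeIso
variable {A B C D : Type u} [SmallCategory A] [SmallCategory B] [SmallCategory C] [SmallCategory D]
  (V : Type v) [Category.{w} V] [HasLimitsOfSize.{u,u} V]
  {s : A ⥤ B} {t : A ⥤ C} {f : B ⥤ D} {g : C ⥤ D} (α : s ⋙ f ⟶ t ⋙ g)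

lemma coBaseChange_app_eq_homEquiv (H : C ⥤ V) :
    (coBaseChange V s t f g α).app H = (s.ranAdjunction V).homEquiv _ _
      (Functor.whiskerRight α (g.ran.obj H) ≫ Functor.whiskerLeft t (g.ranCounit.app H)) := by
  rw [Adjunction.homEquiv_unit]
  simp [coBaseChange, restrictionSquare]

lemma whiskerLeft_coBaseChange_app_comp_ranCounit (H : C ⥤ V) :
    Functor.whiskerLeft s ((coBaseChange V s t f g α).app H) ≫ s.ranCounit.app (t ⋙ H) =
      Functor.whiskerRight α (g.ran.obj H) ≫ Functor.whiskerLeft t (g.ranCounit.app H) := by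
  rw [coBaseChange_app_eq_homEquiv, ← s.ranAdjunction_counit V]
  exact ((s.ranAdjunction V).homEquiv_counit _ _ _).symm.trans (Equiv.symm_apply_apply _ _)

lemma coBaseChange_app_app_comp_ranObjObjIsoLimit_hom (H : C ⥤ V) (b : B) :
    ((coBaseChange V s t f g α).app H).app b ≫ (s.ranObjObjIsoLimit (t ⋙ H) b).hom =
      (g.ranObjObjIsoLimit H (f.obj b)).hom ≫
        limit.pre (StructuredArrow.proj (f.obj b) g ⋙ H) (StructuredArrow.map₂ (𝟙 _) α) := by
  -- `limit.pre` lands in `limit (map₂ _ α ⋙ proj _ g ⋙ H)`, which is `limit (proj b s ⋙ t ⋙ H)`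
  -- only up to unfolding: hence the manual reassociation and `erw`.
  refine limit.hom_ext fun j =>
    (Category.assoc _ _ _).trans (Eq.trans ?_ (Category.assoc _ _ _).symm)
  have hmate := congr_app (whiskerLeft_coBaseChange_app_comp_ranCounit V α H) j.right
  simp only [NatTrans.comp_app, Functor.whiskerLeft_app, Functor.whiskerRight_app] at hmate
  erw [limit.pre_π, Functor.ranObjObjIsoLimit_hom_π, ← NatTrans.naturality_assoc, hmate,
    Functor.ranObjObjIsoLimit_hom_π]
  simp only [StructuredArrow.map₂_obj_hom, Category.id_comp, Functor.map_comp, Category.assoc]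
  rfl

theorem coBaseChange_isIso_of_initial
    [∀ b : B, (StructuredArrow.map₂ (𝟙 (f.obj b)) α).Initial] :
    IsIso (coBaseChange V s t f g α) := by
  have (H : C ⥤ V) (b : B) : IsIso (((coBaseChange V s t f g α).app H).app b) := by
    have := Functor.Initial.limit_pre_isIso (StructuredArrow.map₂ (𝟙 (f.obj b)) α)
      (G := StructuredArrow.proj (f.obj b) g ⋙ H)
    rw [← isIso_comp_right_iff _ (s.ranObjObjIsoLimit (t ⋙ H) b).hom,
      coBaseChange_app_app_comp_ranObjObjIsoLimit_hom]
    exact IsIso.comp_isIso' inferInstance this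
  have (H : C ⥤ V) : IsIso ((coBaseChange V s t f g α).app H) := NatIso.isIso_of_isIso_app _
  exact NatIso.isIso_of_isIso_app _

end BaseChangeIso

namespace Cocomma
variable {A B C : Type u} [SmallCategory A] [SmallCategory B] [SmallCategory C]
  {s : A ⥤ B} {t : A ⥤ C} {b : B}

def homOfWord {c : C} (w : CocommaWord s t b c) : (inlF s t).obj b ⟶ (inrF s t).obj c :=
  Quot.mk _ w

lemma homOfWord_mk (j : StructuredArrow b s) {c : C} (r : t.obj j.right ⟶ c) :
    homOfWord ⟨j.right, j.hom, r⟩ =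
      ((StructuredArrow.map₂ (𝟙 _) (natTrans s t)).obj j).hom ≫ (inrF s t).map r := by
  show _ = Quot.mk _ (⟨j.right, 𝟙 b ≫ j.hom ≫ 𝟙 _, 𝟙 _ ≫ r⟩ : CocommaWord s t b c)
  simp [homOfWord]

variable (d : StructuredArrow ((inlF s t).obj b) (inrF s t))

def costructuredArrowOfWord (w : CocommaWord s t b d.right) (hw : homOfWord w = d.hom) :
    CostructuredArrow (StructuredArrow.map₂ (𝟙 _) (natTrans s t)) d :=
  CostructuredArrow.mk (Y := StructuredArrow.mk w.l)
    (StructuredArrow.homMk w.r ((homOfWord_mk (StructuredArrow.mk w.l) w.r).symm.trans hw))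

lemma exists_eq_costructuredArrowOfWord
    (X : CostructuredArrow (StructuredArrow.map₂ (𝟙 _) (natTrans s t)) d) :
    ∃ (w : CocommaWord s t b d.right) (hw : homOfWord w = d.hom),
      X = costructuredArrowOfWord d w hw := by
  obtain ⟨⟨⟨⟨⟩⟩, a, l⟩, ⟨⟨⟩⟩, ⟨⟨⟨⟨⟩⟩⟩, r, hr⟩⟩ := X
  exact ⟨⟨a, l, r⟩, (homOfWord_mk (StructuredArrow.mk l) r).trans (by simpa using hr.symm), rfl⟩

lemma zigzag_costructuredArrowOfWord {w w' : CocommaWord s t b d.right}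
    (h : Relation.EqvGen (CocommaRel s t b d.right) w w') (hw : homOfWord w = d.hom)
    (hw' : homOfWord w' = d.hom) :
    Zigzag (costructuredArrowOfWord d w hw) (costructuredArrowOfWord d w' hw') := by
  induction h with
  | rel _ _ hrel =>
    obtain ⟨θ, l, r⟩ := hrel
    exact Zigzag.of_hom (CostructuredArrow.homMk (StructuredArrow.homMk θ rfl) (by ext; rfl))
  | refl => exact Zigzag.refl _
  | symm _ _ _ ih => exact (ih hw' hw).symm
  | trans _ w'' _ h₁ _ ih₁ ih₂ =>
    have hw'' : homOfWord w'' = d.hom := (Quot.eqvGen_sound h₁).symm.trans hw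
    exact (ih₁ hw hw'').trans (ih₂ hw'' hw')

instance initial_map₂_natTrans (b : B) :
    (StructuredArrow.map₂ (𝟙 ((inlF s t).obj b)) (natTrans s t)).Initial where
  out d := by
    obtain ⟨w, hw⟩ := Quot.exists_rep (d.hom : CocommaHom s t (.inl b) (.inr d.right))
    have : Nonempty (CostructuredArrow (StructuredArrow.map₂ (𝟙 _) (natTrans s t)) d) :=
      ⟨costructuredArrowOfWord d w hw⟩
    refine zigzag_isConnected fun X Y => ?_
    obtain ⟨wX, hwX, rfl⟩ := exists_eq_costructuredArrowOfWord d X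
    obtain ⟨wY, hwY, rfl⟩ := exists_eq_costructuredArrowOfWord d Y
    exact zigzag_costructuredArrowOfWord d (Quot.eqvGen_exact (hwX.trans hwY.symm)) hwX hwY

end Cocomma

theorem coBaseChange_cocomma_isIso_general
    {A B C : Type u} [SmallCategory A] [SmallCategory B] [SmallCategory C]
    (s : A ⥤ B) (t : A ⥤ C)
    (V : Type v) [Category.{w} V] [HasLimitsOfSize.{u,u} V] :
    IsIso (coBaseChange V s t (Cocomma.inlF s t) (Cocomma.inrF s t) (Cocomma.natTrans s t)) :=
  coBaseChange_isIso_of_initial V (Cocomma.natTrans s t)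

/-- **Dual base change along a cocomma (flow sum) square is an isomorphism:** for the cocomma
square with inclusions `f : B ⥤ B ↑_A C` and `g : C ⥤ B ↑_A C`, the dual base change
transformation `f^* g_* ⟶ s_* t^*` is a natural isomorphism. -/
theorem coBaseChange_cocomma_isIso
    {A B C : Type u} [SmallCategory A] [SmallCategory B] [SmallCategory C]
    (s : A ⥤ B) (t : A ⥤ C)
    (V : Type v) [Category.{w} V] [HasLimitsOfSize.{u,u} V] [HasColimitsOfSize.{u,u} V] :
    IsIso (coBaseChange V s t (Cocomma.inlF s t) (Cocomma.inrF s t) (Cocomma.natTrans s t)) :=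
  coBaseChange_cocomma_isIso_general s t V
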